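/- The difference in errors of two hypotheses from H under distributions P and Q is controlled by the HΔH-divergence: |[ε_P(h) − ε_P(h')] − [ε_Q(h) − ε_Q(h')]| ≤ d_{HΔH}(P,Q) for all h, h' ∈ H, assuming the ideal labeling function h* lies in H. -/

import Mathlib

open MeasureTheory Finset

variable {X : Type*}

/-- Interpret a Boolean hypothesis value as a real number in {0,1}. -/
noncomputable def b2r (b : Bool) : ℝ := if b then 1 else 0

/-- The H-divergence: d_H(P,Q) = 2 · sup_{h∈H} |P({h=1}) − Q({h=1})|. -/
noncomputable def dH [MeasurableSpace X] (H : Set (X → Bool)) (P Q : Measure X) : ℝ :=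
  2 * ⨆ h : H, |(P {x | (h : X → Bool) x = true}).toReal -
    (Q {x | (h : X → Bool) x = true}).toReal|

/-- The error ε_P(h) = E_{x∼P} |h(x) − h*(x)|. -/
noncomputable def err [MeasurableSpace X] (P : Measure X) (h hstar : X → Bool) : ℝ :=
  ∫ x, |b2r (h x) - b2r (hstar x)| ∂P

/-- The symmetric difference hypothesis class HΔH. -/
def sdClass (H : Set (X → Bool)) : Set (X → Bool) :=
  {g | ∃ h ∈ H, ∃ h' ∈ H, g = fun x => xor (h x) (h' x)}

/-! Writing `g = h ⊕ h*` and `g' = h' ⊕ h*`, the errors are `ε_P(h) = P{g = 1}` and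
`ε_P(h') = P{g' = 1}`, and both `g` and `g'` lie in `HΔH` because `h* ∈ H`. The triangle inequality
splits the quantity into `|P{g = 1} - Q{g = 1}| + |P{g' = 1} - Q{g' = 1}|`, and each term is at most
half the divergence. -/

theorem Measurable.xor {α : Type*} [MeasurableSpace α] {f g : α → Bool}
    (hf : Measurable f) (hg : Measurable g) : Measurable fun x => xor (f x) (g x) :=
  (measurable_of_countable fun p : Bool × Bool => Bool.xor p.1 p.2).comp (hf.prodMk hg)

theorem abs_b2r_sub_b2r (a b : Bool) : |b2r a - b2r b| = b2r (xor a b) := by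
  cases a <;> cases b <;> simp [b2r]

theorem b2r_comp_eq_indicator {α : Type*} (g : α → Bool) :
    (fun x => b2r (g x)) = {x | g x = true}.indicator 1 := by
  ext x
  cases hx : g x <;> simp [b2r, Set.indicator, hx]

theorem integral_b2r_comp {α : Type*} [MeasurableSpace α] (μ : Measure α) {g : α → Bool}
    (hg : Measurable g) : ∫ x, b2r (g x) ∂μ = μ.real {x | g x = true} := by
  rw [b2r_comp_eq_indicator]
  exact integral_indicator_one (hg (measurableSet_singleton true))

theorem err_eq_measureReal {α : Type*} [MeasurableSpace α] (μ : Measure α) {h hstar : α → Bool}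
    (hh : Measurable h) (hstar_meas : Measurable hstar) :
    err μ h hstar = μ.real {x | xor (h x) (hstar x) = true} := by
  simp only [err, abs_b2r_sub_b2r]
  exact integral_b2r_comp μ (hh.xor hstar_meas)

theorem two_mul_abs_measureReal_sub_le_dH {α : Type*} [MeasurableSpace α] {G : Set (α → Bool)}
    (P Q : Measure α) [IsZeroOrProbabilityMeasure P] [IsZeroOrProbabilityMeasure Q]
    {g : α → Bool} (hg : g ∈ G) :
    2 * |P.real {x | g x = true} - Q.real {x | g x = true}| ≤ dH G P Q := by
  have hbdd : BddAbove (Set.range fun k : G =>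
      |(P {x | (k : α → Bool) x = true}).toReal - (Q {x | (k : α → Bool) x = true}).toReal|) :=
    ⟨1, by
      rintro _ ⟨k, rfl⟩
      exact abs_sub_le_of_nonneg_of_le measureReal_nonneg measureReal_le_one
        measureReal_nonneg measureReal_le_one⟩
  exact mul_le_mul_of_nonneg_left (le_ciSup hbdd ⟨g, hg⟩) zero_le_two

theorem xor_mem_sdClass {α : Type*} {H : Set (α → Bool)} {h h' : α → Bool}
    (hh : h ∈ H) (hh' : h' ∈ H) : (fun x => xor (h x) (h' x)) ∈ sdClass H :=
  ⟨h, hh, h', hh', rfl⟩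

theorem err_diff_le_sd_div [MeasurableSpace X] (H : Set (X → Bool))
    (hm : ∀ h ∈ H, Measurable h) (hstar : X → Bool) (hstarH : hstar ∈ H)
    (P Q : Measure X) [IsProbabilityMeasure P] [IsProbabilityMeasure Q]
    (h h' : X → Bool) (hh : h ∈ H) (hh' : h' ∈ H) :
    |(err P h hstar - err P h' hstar) - (err Q h hstar - err Q h' hstar)| ≤
      dH (sdClass H) P Q := by
  have hstar_meas := hm hstar hstarH
  rw [err_eq_measureReal P (hm h hh) hstar_meas, err_eq_measureReal P (hm h' hh') hstar_meas,
    err_eq_measureReal Q (hm h hh) hstar_meas, err_eq_measureReal Q (hm h' hh') hstar_meas]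
  have hg := two_mul_abs_measureReal_sub_le_dH P Q (xor_mem_sdClass hh hstarH)
  have hg' := two_mul_abs_measureReal_sub_le_dH P Q (xor_mem_sdClass hh' hstarH)
  set a := P.real {x | xor (h x) (hstar x) = true}
  set b := P.real {x | xor (h' x) (hstar x) = true}
  set c := Q.real {x | xor (h x) (hstar x) = true}
  set d := Q.real {x | xor (h' x) (hstar x) = true}
  calc |(a - b) - (c - d)| = |(a - c) - (b - d)| := by ring_nf
    _ ≤ |a - c| + |b - d| := abs_sub _ _
    _ ≤ dH (sdClass H) P Q := by linarith
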